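/- Let m be a positive integer and p a prime with p ≡ 1 (mod 2m). Then the rational number Σ_{a=1}^{(p−1)/m} q_p(a) − 2·Σ_{a=1}^{(p−1)/(2m)} q_p(a) + (B_p(1/m) − 2^p·B_p(1/(2m)))/p² + (1/m)·H_{(p−1)/m} − (1/m)·H_{(p−1)/(2m)} is congruent to 0 modulo p, i.e. it can be written as p·(a/b) with integers a, b and p ∤ b. -/

import Mathlib

/-!
Congruences modulo `p ^ k` between rationals are expressed as `padicNorm p (x - y) ≤ p⁻¹ ^ k`.

Let `c ∈ {m, 2m}` and `N = (p - 1) / c`, so that `1/c + N = p/c`. Telescoping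
`B_p(x + 1) - B_p(x) = p x^(p-1)` from `1/c` to `p/c` gives
`B_p(1/c) = B_p(p/c) - p N - p² Σ_{j<N} q_p(1/c + j)`.
As `p - 1` is even and `-(1/c + j) = (N - j) - p/c`, the congruence
`q_p(x + p t) ≡ q_p(x) - t/x (mod p)` turns the last sum into `Σ_{a≤N} q_p(a) + H_N / c`.
Expanding `B_p(p/c)` and using von Staudt–Clausen (`B_i` is `p`-integral for `i < p - 1`) gives
`B_p(p/c) ≡ p² B_{p-1} / c (mod p³)`. Altogether
`B_p(1/c)/p² + Σ_{a≤N} q_p(a) + H_N / c ≡ (B_{p-1} + 1/p - 1) / c (mod p)`,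
with `B_{p-1} + 1/p` `p`-integral, again by von Staudt–Clausen. In the combination of the cases
`c = m` and `c = 2m` with weights `1` and `-2^p` these right-hand sides cancel since
`2^(p-1) ≡ 1`, and what is left over is a multiple of `2^p - 2 = 2 p q_p(2)`.
-/

open Finset

def fermatQuotient (p : ℕ) (x : ℚ) : ℚ := (x ^ (p - 1) - 1) / p

theorem fermatQuotient_neg {p : ℕ} (hodd : Odd p) (x : ℚ) :
    fermatQuotient p (-x) = fermatQuotient p x := by
  rw [fermatQuotient, (Nat.Odd.sub_odd hodd odd_one).neg_pow, fermatQuotient]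

theorem bernoulli_eval_add_natCast (n : ℕ) (x : ℚ) (N : ℕ) :
    (Polynomial.bernoulli n).eval (x + N)
      = (Polynomial.bernoulli n).eval x + n * ∑ j ∈ range N, (x + j) ^ (n - 1) := by
  induction N with
  | zero => simp
  | succ N ih =>
    rw [Nat.cast_succ, ← add_assoc, add_comm _ 1, Polynomial.bernoulli_eval_one_add, ih,
      sum_range_succ]
    ring

theorem sum_Icc_one_eq_sum_range_sub {M : Type*} [AddCommMonoid M] (f : ℕ → M) (N : ℕ) :
    ∑ a ∈ Icc 1 N, f a = ∑ j ∈ range N, f (N - j) := by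
  rw [range_eq_Ico, sum_Ico_reflect f 0 (Nat.le_succ N), Nat.add_sub_cancel_left, Nat.sub_zero,
    Ico_add_one_right_eq_Icc]

section PadicNorm

variable {p : ℕ} [hp : Fact p.Prime]

local notation "ν" => padicNorm p

theorem padicNorm_add_le_of_le {x y r : ℚ} (hx : ν x ≤ r) (hy : ν y ≤ r) : ν (x + y) ≤ r :=
  padicNorm.nonarchimedean.trans (max_le hx hy)

theorem padicNorm_sub_le_of_le {x y r : ℚ} (hx : ν x ≤ r) (hy : ν y ≤ r) : ν (x - y) ≤ r :=
  padicNorm.sub.trans (max_le hx hy)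

theorem padicNorm_mul_le_of_le {x y r s : ℚ} (hx : ν x ≤ r) (hy : ν y ≤ s) :
    ν (x * y) ≤ r * s := by
  rw [padicNorm.mul]
  exact mul_le_mul hx hy (padicNorm.nonneg y) ((padicNorm.nonneg x).trans hx)

theorem padicNorm_mul_le_of_le_one_left {x y r : ℚ} (hx : ν x ≤ 1) (hy : ν y ≤ r) :
    ν (x * y) ≤ r := by
  simpa using padicNorm_mul_le_of_le hx hy

theorem padicNorm_pow_le_of_le {x r : ℚ} (hx : ν x ≤ r) (n : ℕ) : ν (x ^ n) ≤ r ^ n := by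
  rw [IsAbsoluteValue.abv_pow (padicNorm p)]
  exact pow_le_pow_left₀ (padicNorm.nonneg x) hx n

theorem padicNorm_pow_le_one {x : ℚ} (hx : ν x ≤ 1) (n : ℕ) : ν (x ^ n) ≤ 1 :=
  (padicNorm_pow_le_of_le hx n).trans_eq (one_pow n)

theorem padicNorm_natCast_mul_le {x : ℚ} (hx : ν x ≤ 1) : ν (p * x) ≤ (p : ℚ)⁻¹ := by
  rw [padicNorm.mul, padicNorm.padicNorm_p_of_prime]
  exact mul_le_of_le_one_right (by positivity) hx

theorem padicNorm_div_natCast_pow_le {x : ℚ} {k l : ℕ} (hx : ν x ≤ (p : ℚ)⁻¹ ^ (k + l)) :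
    ν (x / p ^ k) ≤ (p : ℚ)⁻¹ ^ l := by
  have hp0 : (0 : ℚ) < p := by exact_mod_cast hp.out.pos
  rw [padicNorm.div, IsAbsoluteValue.abv_pow (padicNorm p), padicNorm.padicNorm_p_of_prime,
    div_le_iff₀ (by positivity), ← pow_add, add_comm]
  exact hx

theorem inv_natCast_le_one : (p : ℚ)⁻¹ ≤ 1 :=
  inv_le_one_of_one_le₀ (by exact_mod_cast hp.out.one_le)

theorem inv_natCast_pow_le_of_le {k l : ℕ} (h : k ≤ l) : (p : ℚ)⁻¹ ^ l ≤ (p : ℚ)⁻¹ ^ k :=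
  pow_le_pow_of_le_one (by positivity) inv_natCast_le_one h

theorem padicNorm_natCast_eq_one {n : ℕ} (h0 : 0 < n) (hn : n < p) : ν n = 1 :=
  (padicNorm.nat_eq_one_iff n).2 fun h => (Nat.le_of_dvd h0 h).not_gt hn

theorem padicNorm_natCast_le_of_dvd {n : ℕ} (h : p ∣ n) : ν n ≤ (p : ℚ)⁻¹ := by
  obtain ⟨c, rfl⟩ := h
  push_cast
  exact padicNorm_natCast_mul_le (padicNorm.of_nat c)

theorem padicNorm_intCast_le_of_dvd {n : ℤ} (h : (p : ℤ) ∣ n) : ν n ≤ (p : ℚ)⁻¹ := by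
  obtain ⟨c, rfl⟩ := h
  push_cast
  exact padicNorm_natCast_mul_le (padicNorm.of_int c)

theorem not_dvd_den_of_padicNorm_le_one {x : ℚ} (hx : ν x ≤ 1) : ¬ p ∣ x.den := by
  intro hden
  have hnum : ν x.num < 1 := by
    rw [← Rat.mul_den_eq_num, padicNorm.mul]
    calc ν x * ν x.den ≤ 1 * (p : ℚ)⁻¹ :=
          mul_le_mul hx (padicNorm_natCast_le_of_dvd hden) (padicNorm.nonneg _) zero_le_one
      _ < 1 := by rw [one_mul]; exact inv_lt_one_of_one_lt₀ (by exact_mod_cast hp.out.one_lt)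
  have hnum' : p ∣ x.num.natAbs := Int.natCast_dvd.mp ((padicNorm.int_lt_one_iff _).1 hnum)
  exact hp.out.one_lt.ne' (Nat.eq_one_of_dvd_coprimes x.reduced hnum' hden)

theorem exists_eq_natCast_mul_div_of_padicNorm_le {x : ℚ} (hx : ν x ≤ (p : ℚ)⁻¹) :
    ∃ a b : ℤ, ¬ (p : ℤ) ∣ b ∧ x = p * (a / b) := by
  have hp0 : (p : ℚ) ≠ 0 := by exact_mod_cast hp.out.ne_zero
  have hy : ν (x / p ^ 1) ≤ (p : ℚ)⁻¹ ^ 0 := padicNorm_div_natCast_pow_le (by rwa [pow_one])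
  rw [pow_one, pow_zero] at hy
  refine ⟨(x / p).num, (x / p).den, ?_, ?_⟩
  · exact_mod_cast not_dvd_den_of_padicNorm_le_one hy
  · rw [Int.cast_natCast, Rat.num_div_den, mul_div_cancel₀ x hp0]

theorem padicNorm_pow_sub_one_le {x : ℚ} (hx : ν x = 1) : ν (x ^ (p - 1) - 1) ≤ (p : ℚ)⁻¹ := by
  have hden : ¬ p ∣ x.den := not_dvd_den_of_padicNorm_le_one hx.le
  have hden' : ν x.den = 1 := (padicNorm.nat_eq_one_iff _).2 hden
  have hnum : ¬ (p : ℤ) ∣ x.num := by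
    rw [← padicNorm.int_eq_one_iff, ← Rat.mul_den_eq_num, padicNorm.mul, hx, hden', one_mul]
  have fermat : ∀ z : ℤ, ¬ (p : ℤ) ∣ z → ν ((z : ℚ) ^ (p - 1) - 1) ≤ (p : ℚ)⁻¹ := fun z hz => by
    have hcop : IsCoprime z p :=
      ((Prime.coprime_iff_not_dvd (Nat.prime_iff_prime_int.mp hp.out)).mpr hz).symm
    exact_mod_cast padicNorm_intCast_le_of_dvd
      (Int.ModEq.pow_card_sub_one_eq_one hp.out hcop).symm.dvd
  have hx' : x ^ (p - 1) - 1 = (((x.num : ℚ) ^ (p - 1) - 1) - (((x.den : ℤ) : ℚ) ^ (p - 1) - 1))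
      / (x.den : ℚ) ^ (p - 1) := by
    rw [← Rat.mul_den_eq_num]
    field_simp
    push_cast
    ring
  rw [hx', padicNorm.div, IsAbsoluteValue.abv_pow (padicNorm p), hden', one_pow, div_one]
  exact padicNorm_sub_le_of_le (fermat _ hnum) (fermat _ (by exact_mod_cast hden))

theorem exists_add_pow_succ_eq {x y : ℚ} (hx : ν x ≤ 1) (hy : ν y ≤ 1) (n : ℕ) :
    ∃ r, ν r ≤ 1 ∧ (x + y) ^ (n + 1) = x ^ (n + 1) + (n + 1) * x ^ n * y + y ^ 2 * r := by
  induction n with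
  | zero => exact ⟨0, by simp⟩
  | succ n ih =>
    obtain ⟨r, hr, hn⟩ := ih
    refine ⟨x * r + y * r + (n + 1) * x ^ n, ?_, ?_⟩
    · refine padicNorm_add_le_of_le (padicNorm_add_le_of_le ?_ ?_) ?_
      · exact padicNorm_mul_le_of_le_one_left hx hr
      · exact padicNorm_mul_le_of_le_one_left hy hr
      · exact padicNorm_mul_le_of_le_one_left (by exact_mod_cast padicNorm.of_nat (n + 1))
          (padicNorm_pow_le_one hx n)
    · push_cast
      linear_combination (x + y) * hn

theorem padicNorm_fermatQuotient_le_one {x : ℚ} (hx : ν x = 1) : ν (fermatQuotient p x) ≤ 1 := by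
  have h := padicNorm_div_natCast_pow_le (k := 1) (l := 0) (p := p) (x := x ^ (p - 1) - 1)
    (by simpa using padicNorm_pow_sub_one_le hx)
  simpa [fermatQuotient] using h

theorem padicNorm_fermatQuotient_add_mul_sub_le {x t : ℚ} (hx : ν x = 1) (ht : ν t ≤ 1) :
    ν (fermatQuotient p (x + p * t) - fermatQuotient p x + t / x) ≤ (p : ℚ)⁻¹ := by
  have hx0 : x ≠ 0 := by rintro rfl; simp at hx
  have hpt : ν (p * t) ≤ (p : ℚ)⁻¹ := padicNorm_natCast_mul_le ht
  obtain ⟨s, hs⟩ : ∃ s, p = s + 2 := ⟨p - 2, by have := hp.out.two_le; omega⟩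
  obtain ⟨r, hr, hexp⟩ := exists_add_pow_succ_eq hx.le (hpt.trans inv_natCast_le_one) s
  have key : fermatQuotient p (x + p * t) - fermatQuotient p x + t / x
      = p * (t ^ 2 * r + x ^ s * t) - t / x * (x ^ (p - 1) - 1) := by
    have hp0 : (p : ℚ) ≠ 0 := by exact_mod_cast hp.out.ne_zero
    have hp1 : p - 1 = s + 1 := by omega
    simp only [fermatQuotient, hp1, hexp]
    field_simp
    rw [hs]
    push_cast
    ring
  rw [key]
  refine padicNorm_sub_le_of_le (padicNorm_natCast_mul_le ?_) ?_
  · refine padicNorm_add_le_of_le ?_ ?_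
    · exact padicNorm_mul_le_of_le_one_left (padicNorm_pow_le_one ht 2) hr
    · exact padicNorm_mul_le_of_le_one_left (padicNorm_pow_le_one hx.le s) ht
  · have htx : ν (t / x) ≤ 1 := by rwa [padicNorm.div, hx, div_one]
    exact padicNorm_mul_le_of_le_one_left htx (padicNorm_pow_sub_one_le hx)

theorem padicNorm_bernoulli_add_sum_le_one (k : ℕ) :
    ν (bernoulli (2 * k) +
      ∑ q ∈ range (2 * k + 2) with (q.Prime ∧ (q - 1) ∣ 2 * k) ∧ q = p, (1 : ℚ) / q) ≤ 1 := by
  obtain ⟨z, hz⟩ := Bernoulli.vonStaudt_clausen k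
  rw [← sum_filter_add_sum_filter_not _ (· = p), filter_filter, filter_filter, ← add_assoc] at hz
  rw [eq_sub_of_add_eq hz.symm]
  refine padicNorm_sub_le_of_le (padicNorm.of_int z)
    (padicNorm.sum_le' (fun q hq => ?_) zero_le_one)
  simp only [mem_filter] at hq
  rw [padicNorm.div, padicNorm.one, (padicNorm.nat_eq_one_iff q).2 fun h =>
    hq.2.2 ((Nat.prime_dvd_prime_iff_eq hp.out hq.2.1.1).mp h).symm, div_one]

theorem padicNorm_bernoulli_le_one (hodd : Odd p) {n : ℕ} (hn : n < p - 1) :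
    ν (bernoulli n) ≤ 1 := by
  rcases Nat.even_or_odd n with ⟨k, rfl⟩ | hn_odd
  · rcases Nat.eq_zero_or_pos k with rfl | hk
    · simp
    have hempty : ∑ q ∈ range (2 * k + 2) with (q.Prime ∧ (q - 1) ∣ 2 * k) ∧ q = p,
        (1 : ℚ) / q = 0 := by
      refine sum_eq_zero fun q hq => ?_
      simp only [mem_filter] at hq
      obtain ⟨-, ⟨-, hdvd⟩, rfl⟩ := hq
      exact absurd (Nat.le_of_dvd (by omega) hdvd) (by omega)
    have h := padicNorm_bernoulli_add_sum_le_one (p := p) k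
    rwa [hempty, add_zero, two_mul] at h
  · obtain rfl | hn1 : n = 1 ∨ 1 < n := by rcases hn_odd with ⟨t, rfl⟩; omega
    · have h2 : ν 2 = 1 := by
        exact_mod_cast padicNorm_natCast_eq_one (p := p) two_pos (by
          have := hp.out.two_le; rcases hodd with ⟨t, ht⟩; omega)
      rw [bernoulli_one, neg_div, padicNorm.neg, padicNorm.div, padicNorm.one, h2, div_one]
    · rw [bernoulli_eq_zero_of_odd hn_odd hn1, padicNorm.zero]
      exact zero_le_one

theorem padicNorm_bernoulli_sub_one_add_inv_le_one (hodd : Odd p) :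
    ν (bernoulli (p - 1) + (p : ℚ)⁻¹) ≤ 1 := by
  obtain ⟨k, hk⟩ : ∃ k, p - 1 = 2 * k := (Nat.Odd.sub_odd hodd odd_one).two_dvd
  have hsingle : ∑ q ∈ range (2 * k + 2) with (q.Prime ∧ (q - 1) ∣ 2 * k) ∧ q = p,
      (1 : ℚ) / q = (p : ℚ)⁻¹ := by
    rw [sum_eq_single_of_mem p, one_div]
    · exact mem_filter.mpr ⟨mem_range.mpr (by omega), ⟨hp.out, hk ▸ dvd_rfl⟩, rfl⟩
    · intro q hq hne
      exact absurd (mem_filter.mp hq).2.2 hne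
  have h := padicNorm_bernoulli_add_sum_le_one (p := p) k
  rwa [hsingle, ← hk] at h

theorem padicNorm_bernoulli_eval_natCast_mul_sub_le (hodd : Odd p) {u : ℚ} (hu : ν u ≤ 1) :
    ν ((Polynomial.bernoulli p).eval (p * u) - p ^ 2 * bernoulli (p - 1) * u)
      ≤ (p : ℚ)⁻¹ ^ 3 := by
  have hp3 : 3 ≤ p := by have := hp.out.two_le; rcases hodd with ⟨t, ht⟩; omega
  have hpu : ν (p * u) ≤ (p : ℚ)⁻¹ := padicNorm_natCast_mul_le hu
  -- the terms `i = 0, 1` of `B_p(y) = Σ B_{p-i} C(p,i) y^i` are `B_p = 0` and `p B_{p-1} y`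
  rw [Polynomial.bernoulli_def, Polynomial.eval_finsetSum, show p + 1 = p - 1 + 1 + 1 by omega,
    sum_range_succ', sum_range_succ']
  simp only [Polynomial.eval_monomial, Nat.sub_zero, Nat.choose_zero_right, Nat.choose_one_right,
    bernoulli_eq_zero_of_odd hodd (by omega), zero_mul, add_zero, zero_add, pow_one]
  rw [show ∀ a b : ℚ, a + b * p * (p * u) - p ^ 2 * b * u = a by intros; ring]
  refine padicNorm.sum_le' (fun i hi => ?_) (by positivity)
  have hB : ν (bernoulli (p - (i + 1 + 1))) ≤ 1 :=
    padicNorm_bernoulli_le_one hodd (by have := mem_range.mp hi; omega)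
  rw [mul_assoc]
  refine padicNorm_mul_le_of_le_one_left hB ?_
  have hpow := padicNorm_pow_le_of_le hpu (i + 1 + 1)
  rcases (show i + 1 + 1 ≤ p by have := mem_range.mp hi; omega).lt_or_eq with hlt | heq
  · have hC := padicNorm_natCast_le_of_dvd (hp.out.dvd_choose_self (by omega) hlt)
    calc ν (p.choose (i + 1 + 1) * (p * u) ^ (i + 1 + 1))
        ≤ (p : ℚ)⁻¹ * (p : ℚ)⁻¹ ^ 2 :=
          padicNorm_mul_le_of_le hC (hpow.trans (inv_natCast_pow_le_of_le (by omega)))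
      _ = (p : ℚ)⁻¹ ^ 3 := by ring
  · rw [heq, Nat.choose_self, Nat.cast_one, one_mul]
    exact (heq ▸ hpow).trans (inv_natCast_pow_le_of_le hp3)

theorem lt_of_eq_mul_add_one {c N : ℕ} (hc : 0 < c) (hpN : p = c * N + 1) : c < p ∧ N < p := by
  have hN : 0 < N :=
    Nat.pos_of_ne_zero (by rintro rfl; exact hp.out.one_lt.ne' (by simpa using hpN))
  constructor <;> nlinarith

theorem padicNorm_sum_fermatQuotient_inv_add_sub_le (hodd : Odd p) {c N : ℕ} (hc : 0 < c)
    (hpN : p = c * N + 1) :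
    ν (∑ j ∈ range N, fermatQuotient p (1 / c + j) - ∑ a ∈ Icc 1 N, fermatQuotient p a
      - 1 / c * ∑ a ∈ Icc 1 N, 1 / (a : ℚ)) ≤ (p : ℚ)⁻¹ := by
  obtain ⟨hcp, hNp⟩ := lt_of_eq_mul_add_one hc hpN
  rw [sum_Icc_one_eq_sum_range_sub, sum_Icc_one_eq_sum_range_sub, mul_sum, ← sum_sub_distrib,
    ← sum_sub_distrib]
  refine padicNorm.sum_le' (fun j hj => ?_) (by positivity)
  have hj : j < N := mem_range.mp hj
  have hx : ν ((N - j : ℕ) : ℚ) = 1 := padicNorm_natCast_eq_one (by omega) (by omega)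
  have ht : ν (-(1 / c : ℚ)) ≤ 1 := by
    rw [padicNorm.neg, padicNorm.div, padicNorm.one, padicNorm_natCast_eq_one hc hcp, div_one]
  have hshift : 1 / (c : ℚ) + j = -(((N - j : ℕ) : ℚ) + p * -(1 / c)) := by
    have hc0 : (c : ℚ) ≠ 0 := by exact_mod_cast hc.ne'
    rw [Nat.cast_sub hj.le, hpN]
    push_cast
    field_simp
    ring
  rw [hshift, fermatQuotient_neg hodd]
  convert padicNorm_fermatQuotient_add_mul_sub_le hx ht using 2
  ring

theorem padicNorm_bernoulli_eval_inv_add_sub_le (hodd : Odd p) {c N : ℕ} (hc : 0 < c)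
    (hpN : p = c * N + 1) :
    ν ((Polynomial.bernoulli p).eval (1 / c : ℚ) / p ^ 2 + ∑ a ∈ Icc 1 N, fermatQuotient p a
      + 1 / c * ∑ a ∈ Icc 1 N, 1 / (a : ℚ) - (bernoulli (p - 1) + (p : ℚ)⁻¹ - 1) / c)
      ≤ (p : ℚ)⁻¹ := by
  have hp0 : (p : ℚ) ≠ 0 := by exact_mod_cast hp.out.ne_zero
  have hc0 : (c : ℚ) ≠ 0 := by exact_mod_cast hc.ne'
  have hu : ν (1 / c : ℚ) ≤ 1 := by
    rw [padicNorm.div, padicNorm.one, padicNorm_natCast_eq_one hc (lt_of_eq_mul_add_one hc hpN).1,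
      div_one]
  have htele := bernoulli_eval_add_natCast p (1 / c) N
  have harg : 1 / (c : ℚ) + N = p * (1 / c) := by
    rw [hpN]; push_cast; field_simp; ring
  have hpow : ∀ y : ℚ, y ^ (p - 1) = 1 + p * fermatQuotient p y := fun y => by
    rw [fermatQuotient]; field_simp; ring
  simp only [harg, hpow, sum_add_distrib, sum_const, card_range, nsmul_eq_mul, mul_one,
    ← mul_sum] at htele
  have hcongr := padicNorm_bernoulli_eval_natCast_mul_sub_le hodd hu
  have key : (Polynomial.bernoulli p).eval (1 / c : ℚ) / p ^ 2 + ∑ a ∈ Icc 1 N, fermatQuotient p a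
      + 1 / c * ∑ a ∈ Icc 1 N, 1 / (a : ℚ) - (bernoulli (p - 1) + (p : ℚ)⁻¹ - 1) / c
      = ((Polynomial.bernoulli p).eval (p * (1 / c : ℚ)) - p ^ 2 * bernoulli (p - 1) * (1 / c))
          / p ^ 2
        - (∑ j ∈ range N, fermatQuotient p (1 / c + j) - ∑ a ∈ Icc 1 N, fermatQuotient p a
          - 1 / c * ∑ a ∈ Icc 1 N, 1 / (a : ℚ)) := by
    have hpQ : (p : ℚ) = c * N + 1 := by exact_mod_cast hpN
    rw [htele]
    field_simp
    rw [hpQ]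
    ring
  rw [key]
  exact padicNorm_sub_le_of_le (pow_one (p : ℚ)⁻¹ ▸ padicNorm_div_natCast_pow_le (k := 2) hcongr)
    (padicNorm_sum_fermatQuotient_inv_add_sub_le hodd hc hpN)

theorem padicNorm_sum_fermatQuotient_le_one {N : ℕ} (hN : N < p) :
    ν (∑ a ∈ Icc 1 N, fermatQuotient p a) ≤ 1 :=
  padicNorm.sum_le' (fun _ ha => padicNorm_fermatQuotient_le_one
    (padicNorm_natCast_eq_one (mem_Icc.mp ha).1 ((mem_Icc.mp ha).2.trans_lt hN))) zero_le_one

theorem padicNorm_sum_inv_le_one {N : ℕ} (hN : N < p) : ν (∑ a ∈ Icc 1 N, 1 / (a : ℚ)) ≤ 1 :=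
  padicNorm.sum_le' (fun _ ha => by
    rw [padicNorm.div, padicNorm.one, padicNorm_natCast_eq_one (mem_Icc.mp ha).1
      ((mem_Icc.mp ha).2.trans_lt hN), div_one]) zero_le_one

end PadicNorm

/-- For `m ≥ 1` and a prime `p ≡ 1 (mod 2m)`,
`Σ_{a=1}^{(p−1)/m} q_p(a) − 2·Σ_{a=1}^{(p−1)/(2m)} q_p(a)
  + (B_p(1/m) − 2^p·B_p(1/(2m)))/p² + (1/m)·H_{(p−1)/m} − (1/m)·H_{(p−1)/(2m)}
  ≡ 0 (mod p)` as a rational number, where `q_p(a) = (a^(p−1) − 1)/p` and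
`H_k` is the `k`-th harmonic number. -/
theorem fermat_quotient_diff_bernoulli (m p : ℕ) (hm : 0 < m) (hp : p.Prime)
    (hmod : p % (2 * m) = 1) :
    ∃ a b : ℤ, ¬ (p : ℤ) ∣ b ∧
      (∑ a ∈ Finset.Icc 1 ((p - 1) / m), ((a : ℚ) ^ (p - 1) - 1) / (p : ℚ))
        - 2 * (∑ a ∈ Finset.Icc 1 ((p - 1) / (2 * m)), ((a : ℚ) ^ (p - 1) - 1) / (p : ℚ))
        + ((Polynomial.bernoulli p).eval (1 / (m : ℚ))
            - 2 ^ p * (Polynomial.bernoulli p).eval (1 / (2 * m : ℚ))) / (p : ℚ) ^ 2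
        + (1 / (m : ℚ)) * ∑ a ∈ Finset.Icc 1 ((p - 1) / m), (1 / (a : ℚ))
        - (1 / (m : ℚ)) * ∑ a ∈ Finset.Icc 1 ((p - 1) / (2 * m)), (1 / (a : ℚ))
        = (p : ℚ) * ((a : ℚ) / (b : ℚ)) := by
  have : Fact p.Prime := ⟨hp⟩
  obtain ⟨k, hk⟩ : ∃ k, p = 2 * m * k + 1 :=
    ⟨p / (2 * m), by conv_lhs => rw [← Nat.div_add_mod p (2 * m), hmod]⟩
  have hodd : Odd p := ⟨m * k, by rw [hk]; ring⟩
  have hk2 : p = m * (2 * k) + 1 := by rw [hk]; ring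
  rw [Nat.div_eq_of_eq_mul_right (k := 2 * k) hm (by omega),
    Nat.div_eq_of_eq_mul_right (k := k) (by positivity) (by omega)]
  obtain ⟨hmp, -⟩ := lt_of_eq_mul_add_one hm hk2
  obtain ⟨h2mp, hkp⟩ := lt_of_eq_mul_add_one (by positivity) hk
  have hDm := padicNorm_bernoulli_eval_inv_add_sub_le hodd hm hk2
  have hD2m := padicNorm_bernoulli_eval_inv_add_sub_le hodd (by positivity) hk
  have h2 : padicNorm p 2 = 1 := by exact_mod_cast padicNorm_natCast_eq_one two_pos (by omega)
  have hS := padicNorm_sum_fermatQuotient_le_one hkp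
  have hH := padicNorm_sum_inv_le_one hkp
  have hW := padicNorm_bernoulli_sub_one_add_inv_le_one hodd
  have hm1 := padicNorm_natCast_eq_one hm hmp
  push_cast at hD2m
  refine exists_eq_natCast_mul_div_of_padicNorm_le ?_
  have hX : padicNorm p (fermatQuotient p 2 * (2 * ∑ a ∈ Icc 1 k, fermatQuotient p a
      + (∑ a ∈ Icc 1 k, 1 / (a : ℚ) - (bernoulli (p - 1) + (p : ℚ)⁻¹) + 1) / m)) ≤ 1 := by
    refine padicNorm_mul_le_of_le_one_left (padicNorm_fermatQuotient_le_one h2)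
      (padicNorm_add_le_of_le (padicNorm_mul_le_of_le_one_left h2.le hS) ?_)
    rw [padicNorm.div, hm1, div_one]
    exact padicNorm_add_le_of_le (padicNorm_sub_le_of_le hH hW) padicNorm.one.le
  convert padicNorm_add_le_of_le (padicNorm_sub_le_of_le hDm
    (padicNorm_mul_le_of_le_one_left (padicNorm_pow_le_one h2.le p) hD2m))
    (padicNorm_natCast_mul_le hX) using 2
  have hp0 : (p : ℚ) ≠ 0 := by exact_mod_cast hp.ne_zero
  have hm0 : (m : ℚ) ≠ 0 := by exact_mod_cast hm.ne'
  rw [show (2 : ℚ) ^ p = 2 * 2 ^ (p - 1) by rw [← pow_succ', Nat.sub_add_cancel hp.one_le]]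
  simp only [fermatQuotient]
  field_simp
  ring
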